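/- Let d ∈ ℕ with P_d > 0 and P_{d+1} < 1. If k_d(n⁻, n⁰, n⁺) = 1 − P_d, then n⁻ = 0 and n⁺ = 0, i.e. (n⁻, n⁰, n⁺) = (0, n, 0). -/

import Mathlib

/-- Total weight `W(v) = Σ_{i : v_i ≠ 0} w_i` of the axes with at least one available split. -/
noncomputable def bartW (p : ℕ) (w : Fin p → ℝ) (v : Fin p → ℕ) : ℝ :=
  ∑ i ∈ Finset.univ.filter (fun i => v i ≠ 0), w i

/-- The BART sub-correlation function `k_d(n⁻, n⁰, n⁺)`, defined by well-founded recursion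
on `Σ_i (n⁻_i + n⁺_i)`. -/
noncomputable def bartK (p : ℕ) (w : Fin p → ℝ) (P : ℕ → ℝ)
    (d : ℕ) (nm n0 np : Fin p → ℕ) : ℝ :=
  if ∀ i, nm i + n0 i + np i = 0 then 1
  else
    1 - P d * (1 - (1 / bartW p w (fun i => nm i + n0 i + np i)) *
      ∑ i ∈ Finset.univ.filter (fun i => nm i + n0 i + np i ≠ 0),
        (w i / ((nm i + n0 i + np i : ℕ) : ℝ)) *
          ((∑ k ∈ (Finset.range (nm i)).attach,
              bartK p w P (d+1) (Function.update nm i k.1) n0 np) +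
           (∑ k ∈ (Finset.range (np i)).attach,
              bartK p w P (d+1) nm n0 (Function.update np i k.1))))
termination_by ∑ i, (nm i + np i)
decreasing_by
  · have hk : k.1 < nm i := Finset.mem_range.mp k.2
    refine Finset.sum_lt_sum (fun j _ => ?_) ⟨i, Finset.mem_univ i, ?_⟩
    · rcases eq_or_ne j i with rfl | hj
      · simp only [Function.update_self]; omega
      · simp only [Function.update_of_ne hj]; omega
    · simp only [Function.update_self]; omega
  · have hk : k.1 < np i := Finset.mem_range.mp k.2
    refine Finset.sum_lt_sum (fun j _ => ?_) ⟨i, Finset.mem_univ i, ?_⟩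
    · rcases eq_or_ne j i with rfl | hj
      · simp only [Function.update_self]; omega
      · simp only [Function.update_of_ne hj]; omega
    · simp only [Function.update_self]; omega

/-!
Along the recursion every `k_e` is at least `1 - P_e ≥ 0`: it has the form `1 - P_e (1 - S)`
with `S` a weighted average of non-negative children. Hence `k_d = 1 - P_d` with `P_d > 0` forces
the average `S` at depth `d` to vanish, whereas a nonzero entry of `n⁻` or `n⁺` contributes to it
a child `k_{d+1} ≥ 1 - P_{d+1} > 0` with positive weight.
-/

open Finset Function

noncomputable def bartChildSum (p : ℕ) (w : Fin p → ℝ) (P : ℕ → ℝ) (d : ℕ)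
    (nm n0 np : Fin p → ℕ) (i : Fin p) : ℝ :=
  (∑ k ∈ (range (nm i)).attach, bartK p w P (d + 1) (update nm i k.1) n0 np) +
    ∑ k ∈ (range (np i)).attach, bartK p w P (d + 1) nm n0 (update np i k.1)

noncomputable def bartChildMean (p : ℕ) (w : Fin p → ℝ) (P : ℕ → ℝ) (d : ℕ)
    (nm n0 np : Fin p → ℕ) : ℝ :=
  (1 / bartW p w (fun i => nm i + n0 i + np i)) *
    ∑ i ∈ univ.filter (fun i => nm i + n0 i + np i ≠ 0),
      (w i / ((nm i + n0 i + np i : ℕ) : ℝ)) * bartChildSum p w P d nm n0 np i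

section

variable {p : ℕ} {w : Fin p → ℝ} {P : ℕ → ℝ} {d : ℕ} {nm n0 np : Fin p → ℕ}

theorem bartW_nonneg (hw : ∀ i, 0 ≤ w i) (v : Fin p → ℕ) : 0 ≤ bartW p w v :=
  sum_nonneg fun i _ => hw i

theorem bartW_pos (hw : ∀ i, 0 < w i) {v : Fin p → ℕ} {i : Fin p} (hi : v i ≠ 0) :
    0 < bartW p w v :=
  sum_pos (fun j _ => hw j) ⟨i, mem_filter.2 ⟨mem_univ i, hi⟩⟩

theorem bartK_of_not_forall (h : ¬ ∀ i, nm i + n0 i + np i = 0) :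
    bartK p w P d nm n0 np = 1 - P d * (1 - bartChildMean p w P d nm n0 np) := by
  rw [bartK, if_neg h]
  rfl

theorem bartChildSum_nonneg
    (hK : ∀ x : (Fin p → ℕ) × (Fin p → ℕ), x < (nm, np) → 0 ≤ bartK p w P (d + 1) x.1 n0 x.2)
    (i : Fin p) : 0 ≤ bartChildSum p w P d nm n0 np i :=
  add_nonneg
    (sum_nonneg fun k _ => hK (update nm i k, np)
      (Prod.mk_lt_mk_iff_left.2 (update_lt_self_iff.2 (mem_range.1 k.2))))
    (sum_nonneg fun k _ => hK (nm, update np i k)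
      (Prod.mk_lt_mk_iff_right.2 (update_lt_self_iff.2 (mem_range.1 k.2))))

theorem bartChildMean_nonneg (hw : ∀ i, 0 ≤ w i)
    (hchild : ∀ i, 0 ≤ bartChildSum p w P d nm n0 np i) :
    0 ≤ bartChildMean p w P d nm n0 np :=
  mul_nonneg (one_div_nonneg.2 (bartW_nonneg hw _))
    (sum_nonneg fun i _ => mul_nonneg (div_nonneg (hw i) (Nat.cast_nonneg _)) (hchild i))

theorem one_sub_le_bartK (hw : ∀ i, 0 ≤ w i) (hP : ∀ d, P d ∈ Set.Icc (0 : ℝ) 1)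
    (d : ℕ) (nm n0 np : Fin p → ℕ) : 1 - P d ≤ bartK p w P d nm n0 np := by
  suffices ∀ x : (Fin p → ℕ) × (Fin p → ℕ), ∀ d, 1 - P d ≤ bartK p w P d x.1 n0 x.2 from
    this (nm, np) d
  intro x
  induction x using WellFoundedLT.induction with
  | _ x ih =>
  intro d
  by_cases h0 : ∀ i, x.1 i + n0 i + x.2 i = 0
  · rw [bartK, if_pos h0]
    linarith [(hP d).1]
  have hmean : 0 ≤ bartChildMean p w P d x.1 n0 x.2 :=
    bartChildMean_nonneg hw <| bartChildSum_nonneg fun y hy =>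
      (sub_nonneg.2 (hP (d + 1)).2).trans (ih y hy (d + 1))
  rw [bartK_of_not_forall h0]
  linarith [mul_nonneg (hP d).1 hmean]

theorem bartK_nonneg (hw : ∀ i, 0 ≤ w i) (hP : ∀ d, P d ∈ Set.Icc (0 : ℝ) 1)
    (d : ℕ) (nm n0 np : Fin p → ℕ) : 0 ≤ bartK p w P d nm n0 np :=
  (sub_nonneg.2 (hP d).2).trans (one_sub_le_bartK hw hP d nm n0 np)

theorem bartChildSum_pos (hw : ∀ i, 0 ≤ w i) (hP : ∀ d, P d ∈ Set.Icc (0 : ℝ) 1)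
    (hPd1 : P (d + 1) < 1) {i : Fin p} (hi : nm i + np i ≠ 0) :
    0 < bartChildSum p w P d nm n0 np i := by
  have hK : ∀ nm' np', 0 < bartK p w P (d + 1) nm' n0 np' := fun nm' np' =>
    (sub_pos.2 hPd1).trans_le (one_sub_le_bartK hw hP _ nm' n0 np')
  obtain hm | hp : nm i ≠ 0 ∨ np i ≠ 0 := by omega
  · exact add_pos_of_pos_of_nonneg (sum_pos (fun k _ => hK _ _) (by simpa using hm))
      (sum_nonneg fun k _ => (hK _ _).le)
  · exact add_pos_of_nonneg_of_pos (sum_nonneg fun k _ => (hK _ _).le)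
      (sum_pos (fun k _ => hK _ _) (by simpa using hp))

theorem bartChildMean_pos (hw : ∀ i, 0 < w i) (hP : ∀ d, P d ∈ Set.Icc (0 : ℝ) 1)
    (hPd1 : P (d + 1) < 1) {i : Fin p} (hi : nm i + np i ≠ 0) :
    0 < bartChildMean p w P d nm n0 np := by
  have hw' : ∀ i, 0 ≤ w i := fun i => (hw i).le
  have hn : nm i + n0 i + np i ≠ 0 := by omega
  refine mul_pos (one_div_pos.2 (bartW_pos hw hn)) (sum_pos' (fun j _ => ?_) ⟨i, ?_, ?_⟩)
  · exact mul_nonneg (div_nonneg (hw' j) (Nat.cast_nonneg _))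
      (bartChildSum_nonneg (fun _ _ => bartK_nonneg hw' hP _ _ _ _) j)
  · exact mem_filter.2 ⟨mem_univ i, hn⟩
  · exact mul_pos (div_pos (hw i) (Nat.cast_pos.2 (Nat.pos_of_ne_zero hn)))
      (bartChildSum_pos hw' hP hPd1 hi)

end

theorem bartK_eq_lower_bound_implies_corner_general
    (p : ℕ) (w : Fin p → ℝ) (hw : ∀ i, 0 < w i)
    (P : ℕ → ℝ) (hP : ∀ d, P d ∈ Set.Icc (0 : ℝ) 1)
    (d : ℕ) (hPd : 0 < P d) (hPd1 : P (d + 1) < 1) (nm n0 np : Fin p → ℕ)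
    (h : bartK p w P d nm n0 np = 1 - P d) :
    nm = 0 ∧ np = 0 := by
  have hzero : ∀ i, nm i + np i = 0 := by
    intro i
    by_contra hi
    have hmean := mul_pos hPd (bartChildMean_pos (n0 := n0) hw hP hPd1 hi)
    rw [bartK_of_not_forall fun h0 => hi (by have := h0 i; omega)] at h
    linarith
  exact ⟨funext fun i => (Nat.add_eq_zero_iff.1 (hzero i)).1,
    funext fun i => (Nat.add_eq_zero_iff.1 (hzero i)).2⟩

/-- Property 5 of Theorem 2: if `P_d > 0`, `P_{d+1} < 1` and `k_d(n⁻, n⁰, n⁺) = 1 - P_d`,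
then `n⁻ = 0` and `n⁺ = 0`, i.e. `(n⁻, n⁰, n⁺) = (0, n, 0)`. -/
theorem bartK_eq_lower_bound_implies_corner
    (p : ℕ) (hp : 1 ≤ p) (w : Fin p → ℝ) (hw : ∀ i, 0 < w i)
    (P : ℕ → ℝ) (hP : ∀ d, P d ∈ Set.Icc (0 : ℝ) 1)
    (d : ℕ) (hPd : 0 < P d) (hPd1 : P (d + 1) < 1) (nm n0 np : Fin p → ℕ)
    (h : bartK p w P d nm n0 np = 1 - P d) :
    nm = 0 ∧ np = 0 :=
  bartK_eq_lower_bound_implies_corner_general p w hw P hP d hPd hPd1 nm n0 np h
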